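/- Let d ≥ 1, let 1 ≤ k ≤ d−1, and let V_1, …, V_n (n ≥ 2) be k-dimensional linear subspaces of ℝ^d with positive weights ω_1, …, ω_n. Then {(V_j, ω_j)}_{j=1}^n is an equiangular tight fusion frame (i.e. ⟨P_{V_i}, P_{V_j}⟩ takes the same value for all i ≠ j and Σ_{j=1}^n ω_j P_{V_j} is a positive multiple of the identity) if and only if all the weights ω_j are equal and ⟨P_{V_i}, P_{V_j}⟩ = k(nk−d)/((n−1)d) for all i ≠ j. -/

import Mathlib

open scoped BigOperators

/-- The orthogonal projection onto a subspace `V` of `ℝ^d`, as a linear endomorphism. -/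
noncomputable def proj {d : ℕ} (V : Submodule ℝ (EuclideanSpace ℝ (Fin d))) :
    EuclideanSpace ℝ (Fin d) →ₗ[ℝ] EuclideanSpace ℝ (Fin d) :=
  V.subtype ∘ₗ (V.orthogonalProjectionOnto).toLinearMap

/-- `⟨P_V, P_W⟩ = trace (P_V P_W)`. -/
noncomputable def trPP {d : ℕ} (V W : Submodule ℝ (EuclideanSpace ℝ (Fin d))) : ℝ :=
  LinearMap.trace ℝ _ (proj V ∘ₗ proj W)

/-
Taking traces of the tight-frame identity `∑ ω_j P_j = A • 1`, and of `P_i` times it, gives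
`(∑ ω) k = A d` and `ω_i k + (∑ ω - ω_i) c = A k` for every `i`. Since `c ≠ k` (otherwise
`k = d`), the second identity forces equal weights, and then the two together determine `c`.
Conversely, with equal weights and that value of `c`, the symmetric operator `T = ∑ P_j`
satisfies `(tr T)² = d · tr (T²)`. For `r = tr T / d` this says `tr ((T - r)²) = 0`, which
forces `T = r` since `T - r` is symmetric.
-/

open Module
open LinearMap (trace)

namespace LinearMap.IsSymmetric

variable {E : Type*} [NormedAddCommGroup E] [InnerProductSpace ℝ E] [FiniteDimensional ℝ E]
  {T : E →ₗ[ℝ] E}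

theorem eq_zero_of_trace_mul_self_eq_zero (hT : T.IsSymmetric) (h : trace ℝ E (T * T) = 0) :
    T = 0 := by
  let b := stdOrthonormalBasis ℝ E
  have hsum : trace ℝ E (T * T) = ∑ i, ‖T (b i)‖ ^ 2 := by
    rw [trace_eq_sum_inner _ b]
    refine Finset.sum_congr rfl fun i _ => ?_
    rw [Module.End.mul_apply, ← hT, real_inner_self_eq_norm_sq]
  rw [h, eq_comm, Finset.sum_eq_zero_iff_of_nonneg fun i _ => by positivity] at hsum
  exact b.toBasis.ext fun i => by simpa using hsum i (Finset.mem_univ i)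

/-- Equality case of `(trace T)² ≤ dim E · trace (T²)`. -/
theorem eq_smul_one_of_trace_sq_eq (hT : T.IsSymmetric)
    (h : trace ℝ E T ^ 2 = finrank ℝ E * trace ℝ E (T * T)) :
    T = (trace ℝ E T / finrank ℝ E) • 1 := by
  rcases eq_or_ne (finrank ℝ E) 0 with hE | hE
  · have : Subsingleton E := finrank_zero_iff.mp hE
    exact Subsingleton.elim _ _
  set r := trace ℝ E T / finrank ℝ E
  have hM : (T - r • 1).IsSymmetric := hT.sub (IsSymmetric.one.smul (star_trivial r))
  have htrace : trace ℝ E ((T - r • 1) * (T - r • 1)) = 0 := by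
    simp only [sub_mul, mul_sub, mul_one, one_mul, smul_mul_assoc, mul_smul_comm,
      map_sub, map_smul, trace_one, smul_eq_mul, r]
    field_simp
    linear_combination -h
  exact sub_eq_zero.mp (hM.eq_zero_of_trace_mul_self_eq_zero htrace)

end LinearMap.IsSymmetric

section Projection

variable {d : ℕ} (V : Submodule ℝ (EuclideanSpace ℝ (Fin d)))

theorem proj_eq_starProjection : proj V = V.starProjection := rfl

theorem isSymmetric_proj : (proj V).IsSymmetric := V.starProjection_isSymmetric

theorem isIdempotentElem_proj : IsIdempotentElem (proj V) :=
  ContinuousLinearMap.IsIdempotentElem.toLinearMap V.isIdempotentElem_starProjection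

theorem trace_proj : trace ℝ _ (proj V) = finrank ℝ V := by
  rw [(LinearMap.IsIdempotentElem.isProj_range _ (isIdempotentElem_proj V)).trace,
    proj_eq_starProjection, V.range_starProjection]

theorem trPP_self : trPP V V = finrank ℝ V := by
  rw [trPP, ← Module.End.mul_eq_comp, (isIdempotentElem_proj V).eq, trace_proj]

end Projection

section Frame

variable {d k : ℕ} {ι : Type*} [Fintype ι] {V : ι → Submodule ℝ (EuclideanSpace ℝ (Fin d))}
  (hV : ∀ j, finrank ℝ (V j) = k) (ω : ι → ℝ)
include hV

theorem trace_sum_smul_proj : trace ℝ _ (∑ j, ω j • proj (V j)) = (∑ j, ω j) * k := by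
  simp only [map_sum, map_smul, trace_proj, hV, smul_eq_mul, Finset.sum_mul]

theorem trace_proj_mul_sum_smul_proj [DecidableEq ι] {c : ℝ}
    (hc : ∀ i j, i ≠ j → trPP (V i) (V j) = c) (i : ι) :
    trace ℝ _ (proj (V i) * ∑ j, ω j • proj (V j)) = ω i * k + (∑ j, ω j - ω i) * c := by
  have hsum : trace ℝ _ (proj (V i) * ∑ j, ω j • proj (V j)) = ∑ j, ω j * trPP (V i) (V j) := by
    simp only [Finset.mul_sum, mul_smul_comm, map_sum, map_smul, smul_eq_mul, trPP,
      Module.End.mul_eq_comp]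
  rw [hsum, ← Finset.add_sum_erase _ _ (Finset.mem_univ i), trPP_self, hV,
    Finset.sum_congr rfl fun j hj => by rw [hc i j (Finset.ne_of_mem_erase hj).symm],
    ← Finset.sum_mul, Finset.sum_erase_eq_sub (Finset.mem_univ i)]

theorem weights_eq_and_angle_of_tight [DecidableEq ι] {c A : ℝ} (hk : 0 < k) (hkd : k < d)
    (hc : ∀ i j, i ≠ j → trPP (V i) (V j) = c) (hA : 0 < A)
    (htight : ∑ j, ω j • proj (V j) = A • LinearMap.id) :
    (∀ i j, ω i = ω j) ∧
      c * ((Fintype.card ι - 1) * d) = k * (Fintype.card ι * k - d) := by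
  replace hk : (0 : ℝ) < k := Nat.cast_pos.mpr hk
  replace hkd : (k : ℝ) < d := Nat.cast_lt.mpr hkd
  rw [← Module.End.one_eq_id] at htight
  have htrace : (∑ j, ω j) * k = A * d := by
    simpa [trace_sum_smul_proj hV] using congrArg (trace ℝ _) htight
  have htrace_proj i : ω i * k + (∑ j, ω j - ω i) * c = A * k := by
    simpa [trace_proj_mul_sum_smul_proj hV ω hc, trace_proj, hV] using
      congrArg (fun T => trace ℝ _ (proj (V i) * T)) htight
  have hAd : 0 < A * d := mul_pos hA (hk.trans hkd)
  obtain ⟨i₀⟩ : Nonempty ι := by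
    by_contra hι
    rw [not_nonempty_iff] at hι
    simp only [Finset.univ_eq_empty, Finset.sum_empty, zero_mul] at htrace
    exact hAd.ne htrace
  have hck : c ≠ k := by
    intro hck
    have hAk : A * k = A * d := by
      linear_combination htrace - htrace_proj i₀ + (∑ j, ω j - ω i₀) * hck
    exact hkd.ne (mul_left_cancel₀ hA.ne' hAk)
  have hω i j : ω i = ω j := by
    have h : (ω i - ω j) * (k - c) = 0 := by linear_combination htrace_proj i - htrace_proj j
    simpa [sub_eq_zero, hck.symm] using h
  refine ⟨hω, ?_⟩
  have hsum : ∑ j, ω j = Fintype.card ι * ω i₀ := by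
    simp [fun j => hω j i₀]
  rw [hsum] at htrace htrace_proj
  have hω₀ : ω i₀ ≠ 0 := by
    intro h
    rw [h, mul_zero, zero_mul] at htrace
    exact hAd.ne htrace
  apply mul_left_cancel₀ hω₀
  linear_combination d * htrace_proj i₀ - k * htrace

theorem sum_smul_proj_eq_smul_id_of_equiangular [DecidableEq ι] {c : ℝ} (w : ℝ)
    (hc : ∀ i j, i ≠ j → trPP (V i) (V j) = c)
    (hcval : c * ((Fintype.card ι - 1) * d) = k * (Fintype.card ι * k - d)) :
    ∑ j, w • proj (V j) = (Fintype.card ι * w * k / d) • LinearMap.id := by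
  set n : ℝ := (Fintype.card ι : ℝ)
  have hsymm : (∑ j, w • proj (V j)).IsSymmetric :=
    LinearMap.isSymmetric_sum _ fun j _ => (isSymmetric_proj (V j)).smul (star_trivial w)
  have htrace : trace ℝ _ (∑ j, w • proj (V j)) = n * w * k := by
    simp [trace_sum_smul_proj hV, n]
  have htrace_sq : trace ℝ _ ((∑ j, w • proj (V j)) * ∑ j, w • proj (V j)) =
      n * w * (w * k + (n * w - w) * c) := by
    simp [Finset.sum_mul, trace_proj_mul_sum_smul_proj hV (fun _ => w) hc, n, mul_assoc]
  have hsq : trace ℝ _ (∑ j, w • proj (V j)) ^ 2 =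
      finrank ℝ (EuclideanSpace ℝ (Fin d)) *
        trace ℝ _ ((∑ j, w • proj (V j)) * ∑ j, w • proj (V j)) := by
    rw [htrace, htrace_sq, finrank_euclideanSpace_fin]
    linear_combination -n * w ^ 2 * hcval
  rw [← Module.End.one_eq_id, hsymm.eq_smul_one_of_trace_sq_eq hsq, htrace,
    finrank_euclideanSpace_fin]

end Frame

theorem stmt5_general {d n k : ℕ} (hk1 : 1 ≤ k) (hk2 : k ≤ d - 1) (hn : 2 ≤ n)
    (V : Fin n → Submodule ℝ (EuclideanSpace ℝ (Fin d)))
    (hVdim : ∀ j, Module.finrank ℝ (V j) = k)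
    (ω : Fin n → ℝ) (hω : ∀ j, 0 < ω j) :
    ((∃ c : ℝ, ∀ i j, i ≠ j → trPP (V i) (V j) = c) ∧
      ∃ A : ℝ, 0 < A ∧
        ∑ j, ω j • proj (V j) =
          A • (LinearMap.id : EuclideanSpace ℝ (Fin d) →ₗ[ℝ] EuclideanSpace ℝ (Fin d)))
    ↔
    ((∀ i j, ω i = ω j) ∧
      ∀ i j, i ≠ j →
        trPP (V i) (V j) = (k : ℝ) * ((n : ℝ) * k - d) / (((n : ℝ) - 1) * d)) := by
  have hkd : k < d := by omega
  have hd : (0 : ℝ) < d := by exact_mod_cast (by omega : 0 < d)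
  have hn1 : ((n : ℝ) - 1) * d ≠ 0 := by
    have : (2 : ℝ) ≤ n := by exact_mod_cast hn
    exact mul_ne_zero (by linarith) hd.ne'
  constructor
  · rintro ⟨⟨c, hc⟩, A, hA, htight⟩
    obtain ⟨hωeq, hcval⟩ := weights_eq_and_angle_of_tight hVdim ω hk1 hkd hc hA htight
    refine ⟨hωeq, fun i j hij => ?_⟩
    rw [hc i j hij, eq_div_iff hn1]
    simpa using hcval
  · rintro ⟨hωeq, hc⟩
    let i₀ : Fin n := ⟨0, by omega⟩
    refine ⟨⟨_, hc⟩, n * ω i₀ * k / d, by have := hω i₀; positivity, ?_⟩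
    rw [Finset.sum_congr rfl fun j _ => by rw [hωeq j i₀]]
    simpa using sum_smul_proj_eq_smul_id_of_equiangular hVdim (ω i₀) hc
      (by simpa using div_mul_cancel₀ _ hn1)

theorem stmt5 {d n k : ℕ} (hd : 1 ≤ d) (hk1 : 1 ≤ k) (hk2 : k ≤ d - 1) (hn : 2 ≤ n)
    (V : Fin n → Submodule ℝ (EuclideanSpace ℝ (Fin d)))
    (hVdim : ∀ j, Module.finrank ℝ (V j) = k)
    (ω : Fin n → ℝ) (hω : ∀ j, 0 < ω j) :
    ((∃ c : ℝ, ∀ i j, i ≠ j → trPP (V i) (V j) = c) ∧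
      ∃ A : ℝ, 0 < A ∧
        ∑ j, ω j • proj (V j) =
          A • (LinearMap.id : EuclideanSpace ℝ (Fin d) →ₗ[ℝ] EuclideanSpace ℝ (Fin d)))
    ↔
    ((∀ i j, ω i = ω j) ∧
      ∀ i j, i ≠ j →
        trPP (V i) (V j) = (k : ℝ) * ((n : ℝ) * k - d) / (((n : ℝ) - 1) * d)) :=
  stmt5_general hk1 hk2 hn V hVdim ω hω
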